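/- Let g : ℝᵐ → ℝ ∪ {+∞} be convex and lower semicontinuous, let F : ℝⁿ → ℝᵐ have continuously differentiable components, let x̄ ∈ ℝⁿ satisfy F(x̄) ∈ int(dom g), let Υ > 0, κ_G > 0, Δ̄ > 0, and for each Δ ∈ (0, Δ̄) let F̃_Δ : ℝⁿ → ℝᵐ have C¹ components with F̃_Δ(x̄) = F(x̄) and ‖∇F_i(y) − ∇F̃_{i,Δ}(y)‖ ≤ κ_G Δ^Υ for all i and all y ∈ B_Δ(x̄). Let M = sup{‖w‖ : w ∈ ∂g(F(x̄))} (finite since F(x̄) ∈ int(dom g)). Then for every Δ ∈ (0, Δ̄) and every ṽ ∈ ∇F̃_Δ(x̄)ᵀ ∂g(F(x̄)) there exists v ∈ ∇F(x̄)ᵀ ∂g(F(x̄)) with ‖v − ṽ‖ ≤ M √m κ_G Δ^Υ. -/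

import Mathlib

/-!
Write `ṽ = ∑ wᵢ ∇F̃_{Δ,i}(x̄)` with `w ∈ ∂g(F(x̄))` and take `v = ∑ wᵢ ∇Fᵢ(x̄)`. Then
`‖v − ṽ‖ ≤ ∑ |wᵢ| κG Δ^Υ ≤ √m ‖w‖ κG Δ^Υ` by Cauchy–Schwarz, and `‖w‖ ≤ M` as soon as the norms
of subgradients are bounded above (otherwise `sSup` would be a junk value). They are: a convex
function is continuous, hence bounded above by `g(z̄) + 1` on a ball `B_ε(z̄)` around an interior
point of its domain, and testing the subgradient inequality at `z̄ + (ε / 2) w / ‖w‖` then gives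
`‖w‖ ≤ 2 / ε`.
-/

open Metric Set

/-- The (convex) subdifferential of an extended-real-valued function `g` at `z̄`:
`∂g(z̄) = {w : g(z) ≥ g(z̄) + ⟨w, z − z̄⟩ for all z}`. -/
def ERealSubdiff14 {m : ℕ} (g : EuclideanSpace ℝ (Fin m) → EReal)
    (zbar : EuclideanSpace ℝ (Fin m)) : Set (EuclideanSpace ℝ (Fin m)) :=
  {w | ∀ z, g zbar + ((inner ℝ w (z - zbar) : ℝ) : EReal) ≤ g z}

open Topology

lemma sum_abs_le_sqrt_card_mul_norm {ι : Type*} [Fintype ι] (w : EuclideanSpace ℝ ι) :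
    ∑ i, |w i| ≤ √(Fintype.card ι) * ‖w‖ := by
  have := Real.sum_mul_le_sqrt_mul_sqrt Finset.univ (fun i => |w i|) fun _ => 1
  simpa [EuclideanSpace.norm_eq, mul_comm] using this

lemma norm_sum_smul_le_sqrt_card_mul {ι E : Type*} [Fintype ι] [SeminormedAddCommGroup E]
    [NormedSpace ℝ E] (w : EuclideanSpace ℝ ι) (a : ι → E) {c : ℝ} (hc : 0 ≤ c)
    (ha : ∀ i, ‖a i‖ ≤ c) :
    ‖∑ i, w i • a i‖ ≤ √(Fintype.card ι) * ‖w‖ * c :=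
  calc ‖∑ i, w i • a i‖
      ≤ ∑ i, |w i| * c := by
        refine (norm_sum_le _ _).trans (Finset.sum_le_sum fun i _ => ?_)
        rw [norm_smul, Real.norm_eq_abs]
        exact mul_le_mul_of_nonneg_left (ha i) (abs_nonneg _)
    _ = (∑ i, |w i|) * c := (Finset.sum_mul ..).symm
    _ ≤ √(Fintype.card ι) * ‖w‖ * c := by
        gcongr
        exact sum_abs_le_sqrt_card_mul_norm w

section ExtendedConvex

variable {E : Type*} [NormedAddCommGroup E] [NormedSpace ℝ E] {g : E → EReal}

lemma convexOn_toReal_interior_dom (hgbot : ∀ z, g z ≠ ⊥)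
    (hconv : Convex ℝ {p : E × ℝ | g p.1 ≤ (p.2 : EReal)}) :
    ConvexOn ℝ (interior {z | g z < ⊤}) fun z => (g z).toReal := by
  have hfin : ∀ {z}, g z < ⊤ → g z = ((g z).toReal : EReal) := fun hz =>
    (EReal.coe_toReal hz.ne (hgbot _)).symm
  have hmix : ∀ {x y : E}, g x < ⊤ → g y < ⊤ → ∀ ⦃a b : ℝ⦄, 0 ≤ a → 0 ≤ b → a + b = 1 →
      g (a • x + b • y) ≤ ((a * (g x).toReal + b * (g y).toReal : ℝ) : EReal) :=
    fun hx hy _ _ ha hb hab =>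
      hconv (x := (_, (g _).toReal)) (y := (_, (g _).toReal)) (hfin hx).le (hfin hy).le ha hb hab
  have hsub : ∀ {z}, z ∈ interior {z | g z < ⊤} → g z < ⊤ := fun hz =>
    interior_subset (s := {z | g z < ⊤}) hz
  have hdom : Convex ℝ {z | g z < ⊤} := fun x hx y hy a b ha hb hab =>
    (hmix hx hy ha hb hab).trans_lt (EReal.coe_lt_top _)
  refine ⟨hdom.interior, fun x hx y hy a b ha hb hab => ?_⟩
  have := hmix (hsub hx) (hsub hy) ha hb hab
  rw [hfin (hsub (hdom.interior hx hy ha hb hab))] at this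
  simp only [smul_eq_mul]
  exact_mod_cast this

lemma exists_ball_le_add_one_of_mem_interior_dom [FiniteDimensional ℝ E]
    (hgbot : ∀ z, g z ≠ ⊥) (hconv : Convex ℝ {p : E × ℝ | g p.1 ≤ (p.2 : EReal)})
    {zbar : E} (hzbar : zbar ∈ interior {z | g z < ⊤}) :
    ∃ ε > 0, ∀ z ∈ ball zbar ε, g z ≤ g zbar + 1 := by
  have hopen := isOpen_interior.mem_nhds hzbar
  have hcont : ContinuousAt (fun z => (g z).toReal) zbar :=
    ((convexOn_toReal_interior_dom hgbot hconv).continuousOn isOpen_interior).continuousAt hopen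
  have hnear : ∀ᶠ z in 𝓝 zbar, (g z).toReal ≤ (g zbar).toReal + 1 ∧ z ∈ interior {z | g z < ⊤} :=
    (hcont.eventually_le_const (lt_add_one _)).and hopen
  obtain ⟨ε, hε, hball⟩ := Metric.eventually_nhds_iff.mp hnear
  refine ⟨ε, hε, fun z hz => ?_⟩
  obtain ⟨hle, hz⟩ := hball hz
  rw [← EReal.coe_toReal (interior_subset hz).out.ne (hgbot z),
    ← EReal.coe_toReal (interior_subset hzbar).out.ne (hgbot zbar)]
  exact_mod_cast hle

end ExtendedConvex

lemma norm_le_of_mem_ERealSubdiff14 {m : ℕ} {g : EuclideanSpace ℝ (Fin m) → EReal}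
    {zbar w : EuclideanSpace ℝ (Fin m)} (hbot : g zbar ≠ ⊥) (htop : g zbar ≠ ⊤)
    {ε : ℝ} (hε : 0 < ε) (hball : ∀ z ∈ ball zbar ε, g z ≤ g zbar + 1)
    (hw : w ∈ ERealSubdiff14 g zbar) : ‖w‖ ≤ 2 / ε := by
  rcases eq_or_ne w 0 with rfl | hw0
  · simp only [norm_zero]; positivity
  have hwpos : 0 < ‖w‖ := norm_pos_iff.mpr hw0
  set z := zbar + (ε / 2 / ‖w‖) • w
  have hz : z ∈ ball zbar ε := by
    rw [mem_ball_iff_norm, add_sub_cancel_left, norm_smul, Real.norm_of_nonneg (by positivity),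
      div_mul_cancel₀ _ hwpos.ne']
    linarith
  have hinner : inner ℝ w (z - zbar) = ε / 2 * ‖w‖ := by
    rw [add_sub_cancel_left, real_inner_smul_right, real_inner_self_eq_norm_sq]
    field_simp
  have := (hw z).trans (hball z hz)
  rw [hinner, ← EReal.coe_toReal htop hbot, ← EReal.coe_one, ← EReal.coe_add, ← EReal.coe_add,
    EReal.coe_le_coe_iff] at this
  rw [le_div_iff₀ hε]
  nlinarith

lemma bddAbove_norm_ERealSubdiff14 {m : ℕ} {g : EuclideanSpace ℝ (Fin m) → EReal}
    (hgbot : ∀ z, g z ≠ ⊥)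
    (hconv : Convex ℝ {p : EuclideanSpace ℝ (Fin m) × ℝ | g p.1 ≤ (p.2 : EReal)})
    {zbar : EuclideanSpace ℝ (Fin m)} (hzbar : zbar ∈ interior {z | g z < ⊤}) :
    BddAbove ((fun w => ‖w‖) '' ERealSubdiff14 g zbar) := by
  obtain ⟨ε, hε, hball⟩ := exists_ball_le_add_one_of_mem_interior_dom hgbot hconv hzbar
  refine ⟨2 / ε, ?_⟩
  rintro _ ⟨w, hw, rfl⟩
  exact norm_le_of_mem_ERealSubdiff14 (hgbot zbar) (interior_subset hzbar).out.ne hε hball hw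

theorem subdifferential_approximation_order_bwd_general {n m : ℕ}
    (g : EuclideanSpace ℝ (Fin m) → EReal)
    (hgbot : ∀ z, g z ≠ ⊥)
    (hconv : Convex ℝ {p : EuclideanSpace ℝ (Fin m) × ℝ | g p.1 ≤ (p.2 : EReal)})
    (F : Fin m → EuclideanSpace ℝ (Fin n) → ℝ)
    (xbar : EuclideanSpace ℝ (Fin n))
    (hdom : (WithLp.toLp 2 (fun i => F i xbar) : EuclideanSpace ℝ (Fin m)) ∈ interior {z | g z < ⊤})
    (Υ κG Δbar : ℝ) (hκG : 0 < κG)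
    (Ft : ℝ → Fin m → EuclideanSpace ℝ (Fin n) → ℝ)
    (hgrad : ∀ Δ ∈ Ioo (0:ℝ) Δbar, ∀ i, ∀ y ∈ ball xbar Δ,
      ‖gradient (F i) y - gradient (Ft Δ i) y‖ ≤ κG * Δ ^ Υ)
    (M : ℝ)
    (hM : M = sSup ((fun w => ‖w‖) ''
      ERealSubdiff14 g (WithLp.toLp 2 (fun i => F i xbar) : EuclideanSpace ℝ (Fin m)))) :
    ∀ Δ ∈ Ioo (0:ℝ) Δbar,
      ∀ vt ∈ (fun w : EuclideanSpace ℝ (Fin m) => ∑ i, w i • gradient (Ft Δ i) xbar) ''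
        ERealSubdiff14 g (WithLp.toLp 2 (fun i => F i xbar) : EuclideanSpace ℝ (Fin m)),
      ∃ v ∈ (fun w : EuclideanSpace ℝ (Fin m) => ∑ i, w i • gradient (F i) xbar) ''
        ERealSubdiff14 g (WithLp.toLp 2 (fun i => F i xbar) : EuclideanSpace ℝ (Fin m)),
      ‖v - vt‖ ≤ M * Real.sqrt m * κG * Δ ^ Υ := by
  rintro Δ hΔ _ ⟨w, hw, rfl⟩
  refine ⟨_, ⟨w, hw, rfl⟩, ?_⟩
  have hwM : ‖w‖ ≤ M := hM ▸ le_csSup (bddAbove_norm_ERealSubdiff14 hgbot hconv hdom) ⟨w, hw, rfl⟩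
  have hc : 0 ≤ κG * Δ ^ Υ := mul_nonneg hκG.le (Real.rpow_nonneg hΔ.1.le Υ)
  have hbound := norm_sum_smul_le_sqrt_card_mul w
    (fun i => gradient (F i) xbar - gradient (Ft Δ i) xbar) hc
    fun i => hgrad Δ hΔ i xbar (mem_ball_self hΔ.1)
  rw [Fintype.card_fin] at hbound
  calc ‖∑ i, w i • gradient (F i) xbar - ∑ i, w i • gradient (Ft Δ i) xbar‖
      = ‖∑ i, w i • (gradient (F i) xbar - gradient (Ft Δ i) xbar)‖ := by
        simp only [smul_sub, Finset.sum_sub_distrib]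
    _ ≤ √m * ‖w‖ * (κG * Δ ^ Υ) := hbound
    _ ≤ √m * M * (κG * Δ ^ Υ) := by gcongr
    _ = M * √m * κG * Δ ^ Υ := by ring

/-- Extension of the subdifferential approximation theorem (reverse direction) to models with
gradient error of order `Δ^Υ` (e.g. fully quadratic models, `Υ = 2`): for every
`ṽ ∈ ∇F̃_Δ(x̄)ᵀ ∂g(F(x̄))` there exists `v ∈ ∇F(x̄)ᵀ ∂g(F(x̄))` with
`‖v − ṽ‖ ≤ M √m κG Δ^Υ`. -/
theorem subdifferential_approximation_order_bwd {n m : ℕ}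
    (g : EuclideanSpace ℝ (Fin m) → EReal)
    (hgbot : ∀ z, g z ≠ ⊥)
    (hconv : Convex ℝ {p : EuclideanSpace ℝ (Fin m) × ℝ | g p.1 ≤ (p.2 : EReal)})
    (hlsc : IsClosed {p : EuclideanSpace ℝ (Fin m) × ℝ | g p.1 ≤ (p.2 : EReal)})
    (F : Fin m → EuclideanSpace ℝ (Fin n) → ℝ)
    (hF : ∀ i, ContDiff ℝ 1 (F i))
    (xbar : EuclideanSpace ℝ (Fin n))
    (hdom : (WithLp.toLp 2 (fun i => F i xbar) : EuclideanSpace ℝ (Fin m)) ∈ interior {z | g z < ⊤})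
    (Υ κG Δbar : ℝ) (hΥ : 0 < Υ) (hκG : 0 < κG) (hΔbar : 0 < Δbar)
    (Ft : ℝ → Fin m → EuclideanSpace ℝ (Fin n) → ℝ)
    (hFtC1 : ∀ Δ ∈ Ioo (0:ℝ) Δbar, ∀ i, ContDiff ℝ 1 (Ft Δ i))
    (hcenter : ∀ Δ ∈ Ioo (0:ℝ) Δbar, ∀ i, Ft Δ i xbar = F i xbar)
    (hgrad : ∀ Δ ∈ Ioo (0:ℝ) Δbar, ∀ i, ∀ y ∈ ball xbar Δ,
      ‖gradient (F i) y - gradient (Ft Δ i) y‖ ≤ κG * Δ ^ Υ)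
    (M : ℝ)
    (hM : M = sSup ((fun w => ‖w‖) ''
      ERealSubdiff14 g (WithLp.toLp 2 (fun i => F i xbar) : EuclideanSpace ℝ (Fin m)))) :
    ∀ Δ ∈ Ioo (0:ℝ) Δbar,
      ∀ vt ∈ (fun w : EuclideanSpace ℝ (Fin m) => ∑ i, w i • gradient (Ft Δ i) xbar) ''
        ERealSubdiff14 g (WithLp.toLp 2 (fun i => F i xbar) : EuclideanSpace ℝ (Fin m)),
      ∃ v ∈ (fun w : EuclideanSpace ℝ (Fin m) => ∑ i, w i • gradient (F i) xbar) ''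
        ERealSubdiff14 g (WithLp.toLp 2 (fun i => F i xbar) : EuclideanSpace ℝ (Fin m)),
      ‖v - vt‖ ≤ M * Real.sqrt m * κG * Δ ^ Υ :=
  subdifferential_approximation_order_bwd_general g hgbot hconv F xbar hdom Υ κG Δbar hκG Ft hgrad M
    hM
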